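/- For each θ ∈ (0, nπ/2), the special Lagrangian curvature function R_θ is concave on the set of positive definite symmetric matrices: for A, B positive definite and t ∈ [0,1], R_θ(tA + (1−t)B) ≥ t·R_θ(A) + (1−t)·R_θ(B). -/

import Mathlib

open Real
open Matrix

noncomputable section

lemma arctan_concaveOn : ConcaveOn ℝ (Set.Ici (0:ℝ)) Real.arctan := by
  apply AntitoneOn.concaveOn_of_deriv (convex_Ici 0)
    (Real.continuous_arctan.continuousOn)
    (Real.differentiable_arctan.differentiableOn)
  rw [Real.deriv_arctan, interior_Ici]
  intro x hx y hy hxy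
  have hx' : (0:ℝ) < x := hx
  apply one_div_le_one_div_of_le (by positivity)
  nlinarith

lemma parseval_sq {n : ℕ} (b : OrthonormalBasis (Fin n) ℝ (EuclideanSpace ℝ (Fin n)))
    (x : EuclideanSpace ℝ (Fin n)) (hx : ‖x‖ = 1) :
    ∑ j, (inner (𝕜 := ℝ) (b j) x)^2 = 1 := by
  have h := b.sum_inner_mul_inner x x
  rw [real_inner_self_eq_norm_sq, hx, one_pow] at h
  rw [← h]
  refine Finset.sum_congr rfl fun j _ => ?_
  rw [sq]
  nth_rewrite 1 [real_inner_comm]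
  rfl

lemma quad_form_eq {n : ℕ} {M : Matrix (Fin n) (Fin n) ℝ} (hM : M.IsHermitian)
    (x : EuclideanSpace ℝ (Fin n)) :
    ⇑x ⬝ᵥ M *ᵥ ⇑x = ∑ j, (inner (𝕜 := ℝ) (hM.eigenvectorBasis j) x)^2 * hM.eigenvalues j := by
  set v := hM.eigenvectorBasis with hv
  set y : EuclideanSpace ℝ (Fin n) := WithLp.toLp 2 (M *ᵥ ⇑x : Fin n → ℝ) with hy
  have h := v.sum_inner_mul_inner x y
  have hinner : ∀ (a b : EuclideanSpace ℝ (Fin n)), inner (𝕜 := ℝ) a b = ⇑a ⬝ᵥ ⇑b := by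
    intro a b
    rw [EuclideanSpace.inner_eq_star_dotProduct]
    rw [star_trivial, dotProduct_comm]
  have hvy : ∀ j, inner (𝕜 := ℝ) (v j) y = hM.eigenvalues j * inner (𝕜 := ℝ) (v j) x := by
    intro j
    rw [hinner, hinner]
    have hsym : ⇑(v j) ⬝ᵥ (M *ᵥ ⇑x) = (M *ᵥ ⇑(v j)) ⬝ᵥ ⇑x := by
      have hT : Mᵀ = M := by
        rw [← Matrix.conjTranspose_eq_transpose_of_trivial]
        exact hM.eq
      rw [Matrix.dotProduct_mulVec, ← Matrix.mulVec_transpose, hT]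
    calc ⇑(v j) ⬝ᵥ ⇑y = (M *ᵥ ⇑(v j)) ⬝ᵥ ⇑x := hsym
    _ = (hM.eigenvalues j • ⇑(v j)) ⬝ᵥ ⇑x := by rw [hM.mulVec_eigenvectorBasis]
    _ = hM.eigenvalues j * (⇑(v j) ⬝ᵥ ⇑x) := smul_dotProduct _ _ _
  rw [hinner] at h
  have hgoal : ⇑x ⬝ᵥ ⇑y = ⇑x ⬝ᵥ M *ᵥ ⇑x := rfl
  rw [hgoal] at h
  rw [← h]
  refine Finset.sum_congr rfl fun j _ => ?_
  rw [hvy j, sq]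
  nth_rewrite 1 [real_inner_comm]
  ring

lemma peierls {n : ℕ} {M : Matrix (Fin n) (Fin n) ℝ} (hM : M.IsHermitian)
    (hev : ∀ j, 0 ≤ hM.eigenvalues j) {r : ℝ} (hr : 0 < r)
    (u : OrthonormalBasis (Fin n) ℝ (EuclideanSpace ℝ (Fin n))) :
    ∑ j, arctan (hM.eigenvalues j / r) ≤ ∑ i, arctan ((⇑(u i) ⬝ᵥ M *ᵥ ⇑(u i)) / r) := by
  set v := hM.eigenvectorBasis with hv
  set α := hM.eigenvalues with hα
  set p : Fin n → Fin n → ℝ := fun i j => (inner (𝕜 := ℝ) (v j) (u i))^2 with hp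
  have hrow : ∀ i, ∑ j, p i j = 1 := fun i => parseval_sq v (u i) (u.orthonormal.1 i)
  have hcol : ∀ j, ∑ i, p i j = 1 := by
    intro j
    have h2 := parseval_sq u (v j) (v.orthonormal.1 j)
    rw [← h2]
    refine Finset.sum_congr rfl fun i _ => ?_
    rw [hp]
    rw [real_inner_comm]
  have key : ∀ i, ∑ j, p i j * arctan (α j / r) ≤ arctan ((⇑(u i) ⬝ᵥ M *ᵥ ⇑(u i)) / r) := by
    intro i
    have hq : ⇑(u i) ⬝ᵥ M *ᵥ ⇑(u i) = ∑ j, p i j * α j := quad_form_eq hM (u i)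
    have hj := arctan_concaveOn.le_map_sum (t := Finset.univ) (w := p i)
        (p := fun j => α j / r) (fun j _ => sq_nonneg _) (hrow i)
        (fun j _ => div_nonneg (hev j) hr.le)
    have harg : (⇑(u i) ⬝ᵥ M *ᵥ ⇑(u i)) / r = ∑ j, p i j • (α j / r) := by
      rw [hq, Finset.sum_div]
      exact Finset.sum_congr rfl fun j _ => by rw [smul_eq_mul]; ring
    rw [harg]
    simpa [smul_eq_mul] using hj
  calc ∑ j, arctan (α j / r) = ∑ j, (∑ i, p i j) * arctan (α j / r) := by
        refine Finset.sum_congr rfl fun j _ => by rw [hcol j, one_mul]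
  _ = ∑ i, ∑ j, p i j * arctan (α j / r) := by
        rw [Finset.sum_comm]
        exact Finset.sum_congr rfl fun j _ => Finset.sum_mul ..
  _ ≤ ∑ i, arctan ((⇑(u i) ⬝ᵥ M *ᵥ ⇑(u i)) / r) := Finset.sum_le_sum fun i _ => key i


/- STATEMENT 5: Concavity of R_θ on positive definite symmetric matrices:
if rA = R_θ(A), rB = R_θ(B) and rC = R_θ(tA + (1−t)B) (each characterized by the
defining equation ∑ᵢ arctan(λᵢ/·) = θ), then rC ≥ t·rA + (1−t)·rB. -/
theorem stmt_5 {n : ℕ} (θ : ℝ) (hθ : θ ∈ Set.Ioo (0 : ℝ) ((n : ℝ) * π / 2))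
    (A B : Matrix (Fin n) (Fin n) ℝ) (hA : A.PosDef) (hB : B.PosDef)
    (t : ℝ) (ht : t ∈ Set.Icc (0 : ℝ) 1)
    (hC : (t • A + (1 - t) • B).PosDef)
    (rA rB rC : ℝ) (hrA : 0 < rA) (hrB : 0 < rB) (hrC : 0 < rC)
    (heqA : ∑ i, Real.arctan (hA.1.eigenvalues i / rA) = θ)
    (heqB : ∑ i, Real.arctan (hB.1.eigenvalues i / rB) = θ)
    (heqC : ∑ i, Real.arctan (hC.1.eigenvalues i / rC) = θ) :
    t * rA + (1 - t) * rB ≤ rC := by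
  obtain ⟨hθ0, hθn⟩ := hθ
  obtain ⟨ht0, ht1⟩ := ht
  have hn : n ≠ 0 := by
    rintro rfl
    have : (0:ℝ) < 0 := by simpa using hθ0.trans hθn
    exact lt_irrefl _ this
  have hne : Nonempty (Fin n) := ⟨⟨0, Nat.pos_of_ne_zero hn⟩⟩
  set r₀ := t * rA + (1 - t) * rB with hr₀def
  have hr₀ : 0 < r₀ := by
    have h1 : t * min rA rB ≤ t * rA := mul_le_mul_of_nonneg_left (min_le_left _ _) ht0
    have h2 : (1-t) * min rA rB ≤ (1-t) * rB :=
      mul_le_mul_of_nonneg_left (min_le_right _ _) (by linarith)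
    have h3 : (0:ℝ) < min rA rB := lt_min hrA hrB
    nlinarith
  set s := t * rA / r₀ with hsdef
  have hs0 : 0 ≤ s := by positivity
  have hs1 : s ≤ 1 := by
    rw [hsdef, div_le_one hr₀]
    nlinarith [mul_nonneg (by linarith : (0:ℝ) ≤ 1-t) hrB.le]
  set u := hC.1.eigenvectorBasis with hu
  have hune : ∀ i, (⇑(u i) : Fin n → ℝ) ≠ 0 := fun i => by
    have := u.orthonormal.ne_zero i
    intro h
    apply this
    ext k
    exact congrFun h k
  have ha : ∀ i, 0 < ⇑(u i) ⬝ᵥ A *ᵥ ⇑(u i) := by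
    intro i
    have := hA.dotProduct_mulVec_pos (hune i)
    simpa using this
  have hb : ∀ i, 0 < ⇑(u i) ⬝ᵥ B *ᵥ ⇑(u i) := by
    intro i
    have := hB.dotProduct_mulVec_pos (hune i)
    simpa using this
  have hmu : ∀ i, hC.1.eigenvalues i
      = t * (⇑(u i) ⬝ᵥ A *ᵥ ⇑(u i)) + (1-t) * (⇑(u i) ⬝ᵥ B *ᵥ ⇑(u i)) := by
    intro i
    rw [hC.1.eigenvalues_eq]
    simp [Matrix.add_mulVec, Matrix.smul_mulVec, dotProduct_add,
      dotProduct_smul, smul_eq_mul]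
    rfl
  have hmupos : ∀ i, 0 < hC.1.eigenvalues i := fun i => hC.eigenvalues_pos i
  have hkey : θ ≤ ∑ i, arctan (hC.1.eigenvalues i / r₀) := by
    have hA' : θ ≤ ∑ i, arctan ((⇑(u i) ⬝ᵥ A *ᵥ ⇑(u i)) / rA) := by
      rw [← heqA]; exact peierls hA.1 (fun j => (hA.eigenvalues_pos j).le) hrA u
    have hB' : θ ≤ ∑ i, arctan ((⇑(u i) ⬝ᵥ B *ᵥ ⇑(u i)) / rB) := by
      rw [← heqB]; exact peierls hB.1 (fun j => (hB.eigenvalues_pos j).le) hrB u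
    have hpt : ∀ i, s * arctan ((⇑(u i) ⬝ᵥ A *ᵥ ⇑(u i)) / rA)
        + (1-s) * arctan ((⇑(u i) ⬝ᵥ B *ᵥ ⇑(u i)) / rB)
        ≤ arctan (hC.1.eigenvalues i / r₀) := by
      intro i
      have harg : hC.1.eigenvalues i / r₀
          = s • ((⇑(u i) ⬝ᵥ A *ᵥ ⇑(u i)) / rA) + (1-s) • ((⇑(u i) ⬝ᵥ B *ᵥ ⇑(u i)) / rB) := by
        rw [hmu i, hsdef, smul_eq_mul, smul_eq_mul]
        field_simp
        ring
      rw [harg]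
      have := arctan_concaveOn.2 (Set.mem_Ici.2 (div_nonneg (ha i).le hrA.le))
        (Set.mem_Ici.2 (div_nonneg (hb i).le hrB.le)) hs0 (by linarith : (0:ℝ) ≤ 1-s)
        (by ring : s + (1-s) = 1)
      simpa [smul_eq_mul] using this
    calc θ = s * θ + (1-s) * θ := by ring
    _ ≤ s * (∑ i, arctan ((⇑(u i) ⬝ᵥ A *ᵥ ⇑(u i)) / rA))
          + (1-s) * (∑ i, arctan ((⇑(u i) ⬝ᵥ B *ᵥ ⇑(u i)) / rB)) :=
        add_le_add (mul_le_mul_of_nonneg_left hA' hs0)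
          (mul_le_mul_of_nonneg_left hB' (by linarith))
    _ = ∑ i, (s * arctan ((⇑(u i) ⬝ᵥ A *ᵥ ⇑(u i)) / rA)
          + (1-s) * arctan ((⇑(u i) ⬝ᵥ B *ᵥ ⇑(u i)) / rB)) := by
        rw [Finset.mul_sum, Finset.mul_sum, ← Finset.sum_add_distrib]
    _ ≤ ∑ i, arctan (hC.1.eigenvalues i / r₀) := Finset.sum_le_sum fun i _ => hpt i
  by_contra hlt
  push_neg at hlt
  have hstrict : ∑ i, arctan (hC.1.eigenvalues i / r₀) < ∑ i, arctan (hC.1.eigenvalues i / rC) := by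
    apply Finset.sum_lt_sum_of_nonempty Finset.univ_nonempty
    intro i _
    apply Real.arctan_strictMono
    exact div_lt_div_of_pos_left (hmupos i) hrC hlt
  rw [heqC] at hstrict
  linarith
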